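/- Suppose among ηn−1 independent trials each succeeds with probability 1/n, and let J be the number of successes. If a node accepts a request with probability 1 when J ≤ k−1 and with probability k/(J+1) when J ≥ k, then the overall acceptance probability σ satisfies σ ≥ 1 − (η − 1/n)/k. -/
import Mathlib


open Finset

lemma aux_sum (p q : ℝ) (N : ℕ) :
    ∑ j ∈ Finset.range (N + 1), (N.choose j : ℝ) * p ^ j * q ^ (N - j) = (p + q) ^ N := by
  rw [add_pow]
  exact Finset.sum_congr rfl fun j _ => by ring

lemma aux_mean (p q : ℝ) (N : ℕ) :
    ∑ j ∈ Finset.range (N + 1), (j : ℝ) * ((N.choose j : ℝ) * p ^ j * q ^ (N - j))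
      = N * p * (p + q) ^ (N - 1) := by
  cases N with
  | zero => simp
  | succ M =>
    rw [Finset.sum_range_succ']
    simp only [Nat.cast_zero, zero_mul, add_zero, Nat.succ_sub_one]
    have key : ∀ i ∈ Finset.range (M + 1),
        ((i + 1 : ℕ) : ℝ) * (((M + 1).choose (i + 1) : ℝ) * p ^ (i + 1) * q ^ (M + 1 - (i + 1)))
        = ((M : ℝ) + 1) * p * ((M.choose i : ℝ) * p ^ i * q ^ (M - i)) := by
      intro i hi
      have h1 : (M + 1) * M.choose i = (M + 1).choose (i + 1) * (i + 1) :=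
        Nat.add_one_mul_choose_eq M i
      have h1' : ((M : ℝ) + 1) * (M.choose i : ℝ)
          = ((M + 1).choose (i + 1) : ℝ) * ((i : ℝ) + 1) := by exact_mod_cast h1
      have h2 : M + 1 - (i + 1) = M - i := by omega
      rw [h2, pow_succ]
      push_cast
      linear_combination (-(p ^ i * p * q ^ (M - i))) * h1'
    rw [Finset.sum_congr rfl key, ← Finset.mul_sum, aux_sum]
    push_cast
    ring

/-- Among `η*n - 1 = m - 1` independent trials each succeeding with probability `1/n`,
let `J` be binomially distributed. If a node accepts with probability 1 when `J ≤ k-1`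
and with probability `k/(J+1)` when `J ≥ k`, the acceptance probability `σ` satisfies
`σ ≥ 1 - (η - 1/n)/k`. -/
theorem stmt5 (n k m : ℕ) (hn : 0 < n) (hk : 0 < k) (hm : 0 < m)
    (η : ℝ) (hη0 : 0 < η) (hη1 : η ≤ 1) (hηn : η * n = m) :
    1 - (η - 1 / n) / k ≤
      (∑ j ∈ Finset.range k,
          ((m - 1).choose j : ℝ) * (1 / n) ^ j * (1 - 1 / n) ^ (m - 1 - j)) +
      ∑ j ∈ Finset.Icc k (m - 1),
          (((m - 1).choose j : ℝ) * (1 / n) ^ j * (1 - 1 / n) ^ (m - 1 - j)) *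
            ((k : ℝ) / ((j : ℝ) + 1)) := by
  have hn1 : (1 : ℝ) ≤ (n : ℝ) := by exact_mod_cast hn
  have hnpos : (0 : ℝ) < (n : ℝ) := by linarith
  have hkpos : (0 : ℝ) < (k : ℝ) := by exact_mod_cast hk
  set p : ℝ := 1 / (n : ℝ) with hpdef
  set q : ℝ := 1 - 1 / (n : ℝ) with hqdef
  set N : ℕ := m - 1 with hNdef
  have hp : 0 ≤ p := by positivity
  have hq : 0 ≤ q := by
    have : 1 / (n : ℝ) ≤ 1 := by
      rw [div_le_one hnpos]; exact hn1
    rw [hqdef]; linarith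
  have hpq : p + q = 1 := by simp [hpdef, hqdef]
  set f : ℕ → ℝ := fun j => (N.choose j : ℝ) * p ^ j * q ^ (N - j) with hf
  have hfnn : ∀ j, 0 ≤ f j := fun j => by
    have : (0 : ℝ) ≤ (N.choose j : ℝ) := by positivity
    simp only [hf]; positivity
  have hsum : ∑ j ∈ Finset.range (N + 1), f j = 1 := by
    simp only [hf]; rw [aux_sum, hpq, one_pow]
  have hmean : ∑ j ∈ Finset.range (N + 1), (j : ℝ) * f j = N * p := by
    simp only [hf]; rw [aux_mean, hpq, one_pow, mul_one]
  have hg : ∑ j ∈ Finset.range (N + 1), f j * (1 - (j : ℝ) / k) = 1 - N * p / k := by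
    have heach : ∀ j ∈ Finset.range (N + 1),
        f j * (1 - (j : ℝ) / k) = f j - (1 / k) * ((j : ℝ) * f j) := fun j _ => by ring
    rw [Finset.sum_congr rfl heach, Finset.sum_sub_distrib, ← Finset.mul_sum, hsum, hmean]
    ring
  have hle : ∑ j ∈ Finset.range (N + 1), f j * (1 - (j : ℝ) / k) ≤
      (∑ j ∈ Finset.range k, f j) +
        ∑ j ∈ Finset.Icc k N, f j * ((k : ℝ) / ((j : ℝ) + 1)) := by
    by_cases hcase : k ≤ N
    · have hsplit : ∑ j ∈ Finset.range (N + 1), f j * (1 - (j : ℝ) / k)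
          = (∑ j ∈ Finset.range k, f j * (1 - (j : ℝ) / k))
            + ∑ j ∈ Finset.Ico k (N + 1), f j * (1 - (j : ℝ) / k) := by
        rw [Finset.range_eq_Ico, ← Finset.sum_Ico_consecutive _ (Nat.zero_le k) (by omega),
          ← Finset.range_eq_Ico]
      rw [hsplit]
      apply add_le_add
      · apply Finset.sum_le_sum
        intro j hj
        have h0 : (0 : ℝ) ≤ (j : ℝ) / k := by positivity
        nlinarith [hfnn j]
      · rw [← Finset.Ico_add_one_right_eq_Icc]
        apply Finset.sum_le_sum
        intro j hj
        have hjk : k ≤ j := (Finset.mem_Ico.mp hj).1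
        have hjk' : (k : ℝ) ≤ (j : ℝ) := by exact_mod_cast hjk
        have h1 : (1 : ℝ) - (j : ℝ) / k ≤ 0 := by
          rw [sub_nonpos, le_div_iff₀ hkpos]; linarith
        have h2 : (0 : ℝ) ≤ f j * ((k : ℝ) / ((j : ℝ) + 1)) := by
          have := hfnn j
          have h3 : (0 : ℝ) ≤ (k : ℝ) / ((j : ℝ) + 1) := by positivity
          positivity
        nlinarith [hfnn j]
    · have hIcc : Finset.Icc k N = ∅ := Finset.Icc_eq_empty (by omega)
      rw [hIcc, Finset.sum_empty, add_zero]
      calc ∑ j ∈ Finset.range (N + 1), f j * (1 - (j : ℝ) / k)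
          ≤ ∑ j ∈ Finset.range (N + 1), f j := by
            apply Finset.sum_le_sum
            intro j hj
            have h0 : (0 : ℝ) ≤ (j : ℝ) / k := by positivity
            nlinarith [hfnn j]
        _ ≤ ∑ j ∈ Finset.range k, f j := by
            apply Finset.sum_le_sum_of_subset_of_nonneg
            · exact Finset.range_subset_range.mpr (by omega)
            · intro j _ _; exact hfnn j
  have hNc : (N : ℝ) = (m : ℝ) - 1 := by
    have : (1 : ℕ) ≤ m := hm
    rw [hNdef, Nat.cast_sub this, Nat.cast_one]
  have hNp : (N : ℝ) * p = η - 1 / n := by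
    rw [hNc, hpdef, ← hηn]
    field_simp
  linarith [hg, hle, hNp ▸ hg]
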